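/- arXiv:1010.1086 — 6 statements merged into one kernel-verified Lean document; each statement's English description precedes it below -/
import Mathlib

section
/- For every α ∈ (0,1), every n ≥ 1 and every configuration w ∈ W_{2n}, one has φ_α(w) ≥ (1+n)^α. -/
open scoped BigOperators ENNReal

attribute [local instance] Classical.propDecidable

namespace Cooling

/-- Words over the alphabet `{1,2}`, modeled as lists of booleans:
`true` encodes the letter `1`, `false` encodes the letter `2`. -/
abbrev Word := List Bool

/-- `w` is a configuration of length `2*n`: a word of length `2*n` with as many
occurrences of the letter `1` (`true`) as of the letter `2` (`false`). -/
def IsConfig (n : ℕ) (w : Word) : Prop :=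
  w.length = 2 * n ∧ w.count true = n

/-- The (finite) set `W_{2n}` of all configurations of length `2*n`. -/
def configSet (n : ℕ) : Finset Word :=
  ((Finset.univ : Finset (Fin (2 * n) → Bool)).image List.ofFn).filter
    (fun w => w.count true = n)

/-- The number `E(w)` of mismatches of `w`: positions `i` with `w_i = w_{i+1}`. -/
def mismatches (w : Word) : ℕ :=
  (w.zip w.tail).countP (fun p => p.1 == p.2)

/-- The number `F(w)` of flips performable on `w`: positions `i` with `w_i ≠ w_{i+1}`. -/
def flipCount (w : Word) : ℕ :=
  (w.zip w.tail).countP (fun p => p.1 != p.2)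

/-- The word `w^{(i)}` obtained from `w` by exchanging the letters at positions
`i` and `i+1` (0-indexed). -/
def flip (w : Word) (i : ℕ) : Word :=
  (w.set i (w.getD (i + 1) true)).set (i + 1) (w.getD i true)

/-- A flip is permitted at position `i` if both positions `i` and `i+1` exist and the
corresponding letters are different. -/
def CanFlip (w : Word) (i : ℕ) : Prop :=
  i + 1 < w.length ∧ w.getD i true ≠ w.getD (i + 1) true

/-- The set of positions at which a flip is allowed in the cooling process:
positions of permitted flips which do not increase the number of mismatches. -/
noncomputable def allowedFlips (w : Word) : Finset ℕ :=
  (Finset.range w.length).filter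
    (fun i => CanFlip w i ∧ mismatches (flip w i) ≤ mismatches w)

/-- One step of the cooling process: if `E(w) = 0`, stay at `w`; otherwise, perform
a flip chosen uniformly at random among the flips which do not increase the number
of mismatches. -/
noncomputable def coolStep (w : Word) : PMF Word :=
  if h : mismatches w ≠ 0 ∧ (allowedFlips w).Nonempty then
    (PMF.uniformOfFinset (allowedFlips w) h.2).map (flip w)
  else
    PMF.pure w

/-- The distribution of the cooling process at time `t`, started from `w`. -/
noncomputable def coolDist (w : Word) : ℕ → PMF Word
  | 0 => PMF.pure w
  | t + 1 => (coolDist w t).bind coolStep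

/-- The expected convergence time `E[T | w₀ = w]` of the cooling process started at `w`,
where `T = min {t ≥ 0 : E(w_t) = 0}`.  Since mismatch-free configurations are absorbing,
`E[T] = ∑_{t ≥ 0} P(T > t) = ∑_{t ≥ 0} P(E(w_t) ≠ 0)`. -/
noncomputable def expConvTime (w : Word) : ℝ≥0∞ :=
  ∑' t : ℕ, (coolDist w t).toOuterMeasure {v | mismatches v ≠ 0}

/-- The factor of `w` starting at position `s` (0-indexed) of length `l`. -/
def factor (w : Word) (s l : ℕ) : Word := (w.drop s).take l

/-- The height `|p|₁ - |p|₂` of the length-`s` prefix `p` of `w`. -/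
def height (w : Word) (s : ℕ) : ℤ :=
  ((w.take s).count true : ℤ) - (w.take s).count false

/-- The occurrence `(s, l)` is a positive Dyck factor of `w`. -/
def IsPosDyckAt (w : Word) (s l : ℕ) : Prop :=
  0 < l ∧ s + l ≤ w.length ∧
  (factor w s l).count true = (factor w s l).count false ∧
  (∀ i ≤ l, ((factor w s l).take i).count false ≤ ((factor w s l).take i).count true) ∧
  0 ≤ height w s

/-- The occurrence `(s, l)` is a negative Dyck factor of `w`. -/
def IsNegDyckAt (w : Word) (s l : ℕ) : Prop :=
  0 < l ∧ s + l ≤ w.length ∧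
  (factor w s l).count true = (factor w s l).count false ∧
  (∀ i ≤ l, ((factor w s l).take i).count true ≤ ((factor w s l).take i).count false) ∧
  height w s ≤ 0

/-- The occurrence `(s, l)` is a Dyck factor of `w` (positive or negative). -/
def IsDyckAt (w : Word) (s l : ℕ) : Prop :=
  IsPosDyckAt w s l ∨ IsNegDyckAt w s l

/-- The occurrence `(s, l)` is a maximal Dyck factor of `w`: no Dyck factor of `w`
with the same height contains it (other than itself). -/
def IsMaxDyckAt (w : Word) (s l : ℕ) : Prop :=
  IsDyckAt w s l ∧
  ∀ s' l', IsDyckAt w s' l' → height w s' = height w s → s' ≤ s → s + l ≤ s' + l' →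
    s' = s ∧ l' = l

/-- The set `DF(w)` of (occurrences of) maximal Dyck factors of `w`,
encoded as pairs (starting position, length). -/
noncomputable def DF (w : Word) : Finset (ℕ × ℕ) :=
  ((Finset.range (w.length + 1)) ×ˢ (Finset.range (w.length + 1))).filter
    (fun sl => IsMaxDyckAt w sl.1 sl.2)

/-- The variant `φ_α(w) = ∑_{v ∈ DF(w)} (1 + |v|₁)^α`. -/
noncomputable def phi (α : ℝ) (w : Word) : ℝ :=
  ∑ sl ∈ DF w, (1 + ((factor w sl.1 sl.2).count true : ℝ)) ^ α

/-- The volume `V(w) = (1/2) ∑_{k=1}^{|w|} |h_{k-1}(w) + h_k(w)|`: the area between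
the broken-line representation of `w` and the horizontal axis. -/
noncomputable def volume (w : Word) : ℝ :=
  (1 / 2) * ∑ k ∈ Finset.range w.length, |((height w k + height w (k + 1) : ℤ) : ℝ)|

/-! Every position of a balanced word lies in an excursion of its height profile between two
consecutive zeros; such an excursion is a Dyck factor, and every Dyck factor lies in a maximal
one. So the maximal Dyck factors cover all letters `1` of `w`, whence `n ≤ ∑_{v ∈ DF(w)} |v|₁`,
and subadditivity of `x ↦ x ^ α` gives `(1 + n) ^ α ≤ ∑_{v ∈ DF(w)} (1 + |v|₁) ^ α`. -/

open Finset

lemma rpow_one_add_sum_le {ι : Type*} {s : Finset ι} (hs : s.Nonempty) {f : ι → ℝ}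
    (hf : ∀ i ∈ s, 0 ≤ f i) {p : ℝ} (hp0 : 0 ≤ p) (hp1 : p ≤ 1) :
    (1 + ∑ i ∈ s, f i) ^ p ≤ ∑ i ∈ s, (1 + f i) ^ p := by
  have hle : 1 + ∑ i ∈ s, f i ≤ ∑ i ∈ s, (1 + f i) := by
    rw [sum_add_distrib, sum_const, nsmul_one]
    gcongr
    exact_mod_cast hs.card_pos
  calc (1 + ∑ i ∈ s, f i) ^ p ≤ (∑ i ∈ s, (1 + f i)) ^ p := by
        gcongr
        linarith [sum_nonneg hf]
    _ ≤ ∑ i ∈ s, (1 + f i) ^ p :=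
        le_sum_nonempty_of_subadditive_on_pred (fun x : ℝ => x ^ p) (0 ≤ ·)
          (fun _ _ hx hy => Real.rpow_add_le_add_rpow hx hy hp0 hp1)
          (fun _ _ => add_nonneg) _ s hs fun i hi => by linarith [hf i hi]

lemma pos_of_ne_zero_of_sub_one_le {f : ℕ → ℤ} {s m : ℕ} (hf : ∀ j, f j - 1 ≤ f (j + 1))
    (hs : 0 < f (s + 1)) (hne : ∀ j, s < j → j < m → f j ≠ 0) :
    ∀ j, s < j → j < m → 0 < f j := by
  intro j hsj hjm
  induction j, hsj using Nat.le_induction with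
  | base => exact hs
  | succ j hsj ih =>
    have := ih (by omega)
    have := hf j
    have := hne (j + 1) (by omega) hjm
    omega

lemma count_take_eq_card (w : Word) (b : Bool) (m : ℕ) :
    (w.take m).count b = #{k ∈ range m | w[k]? = some b} := by
  induction m with
  | zero => simp
  | succ m ih =>
    rw [List.take_add_one, List.count_append, ih, range_add_one, filter_insert]
    split_ifs with h
    · rw [card_insert_of_notMem (by simp), h]
      simp
    · cases hm : w[m]? <;> simp_all

lemma count_factor_eq_card (w : Word) (b : Bool) (s l : ℕ) :
    (factor w s l).count b = #{k ∈ Ico s (s + l) | w[k]? = some b} := by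
  have h := count_take_eq_card w b (s + l)
  rw [List.take_add, List.count_append, count_take_eq_card] at h
  have := sum_range_add_sum_Ico (fun k => if w[k]? = some b then 1 else 0) (Nat.le_add_right s l)
  simp only [← card_filter] at this
  rw [factor]
  omega

lemma factor_take (w : Word) {s l i : ℕ} (h : i ≤ l) : (factor w s l).take i = factor w s i := by
  rw [factor, factor, List.take_take, min_eq_left h]

lemma height_add (w : Word) (s i : ℕ) :
    height w (s + i) =
      height w s + ((factor w s i).count true - (factor w s i).count false : ℤ) := by
  simp only [height, factor, List.take_add, List.count_append]
  push_cast
  ring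

lemma abs_height_succ_sub_le (w : Word) (j : ℕ) : |height w (j + 1) - height w j| ≤ 1 := by
  have hlen : (factor w j 1).length ≤ 1 := by simp [factor]
  have := List.count_true_add_count_false (factor w j 1)
  rw [height_add, abs_le]
  omega

lemma IsConfig.height_length_eq_zero {n : ℕ} {w : Word} (hw : IsConfig n w) :
    height w w.length = 0 := by
  obtain ⟨hlen, hcount⟩ := hw
  have := List.count_true_add_count_false w
  simp only [height, List.take_length]
  omega

section DyckFactors

variable {w : Word} {s l : ℕ}

lemma IsDyckAt.add_le_length (hd : IsDyckAt w s l) : s + l ≤ w.length :=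
  hd.elim (·.2.1) (·.2.1)

lemma mem_DF_iff {p : ℕ × ℕ} : p ∈ DF w ↔ IsMaxDyckAt w p.1 p.2 := by
  refine ⟨fun h => (mem_filter.mp h).2, fun h => mem_filter.mpr ⟨?_, h⟩⟩
  have := h.1.add_le_length
  simp only [mem_product, mem_range]
  omega

lemma isPosDyckAt_of_height (hl : 0 < l) (hsl : s + l ≤ w.length) (hs : 0 ≤ height w s)
    (hend : height w (s + l) = height w s) (hge : ∀ i ≤ l, height w s ≤ height w (s + i)) :
    IsPosDyckAt w s l := by
  refine ⟨hl, hsl, ?_, fun i hi => ?_, hs⟩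
  · have := height_add w s l
    omega
  · have := height_add w s i
    have := hge i hi
    rw [factor_take w hi]
    omega

lemma isNegDyckAt_of_height (hl : 0 < l) (hsl : s + l ≤ w.length) (hs : height w s ≤ 0)
    (hend : height w (s + l) = height w s) (hle : ∀ i ≤ l, height w (s + i) ≤ height w s) :
    IsNegDyckAt w s l := by
  refine ⟨hl, hsl, ?_, fun i hi => ?_, hs⟩
  · have := height_add w s l
    omega
  · have := height_add w s i
    have := hle i hi
    rw [factor_take w hi]
    omega

lemma isDyckAt_of_height_ne_zero {m : ℕ} (hsm : s < m) (hm : m ≤ w.length)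
    (hs : height w s = 0) (hm0 : height w m = 0) (hne : ∀ j, s < j → j < m → height w j ≠ 0) :
    IsDyckAt w s (m - s) := by
  have hstep := fun j => abs_le.mp (abs_height_succ_sub_le w j)
  have hend : height w (s + (m - s)) = height w s := by rw [Nat.add_sub_cancel' hsm.le, hm0, hs]
  have hcases : ∀ i ≤ m - s, height w (s + i) = 0 ∨ (s < s + i ∧ s + i < m) := by
    intro i hi
    rcases Nat.eq_zero_or_pos i with rfl | hi0
    · exact Or.inl hs
    rcases hi.lt_or_eq with hlt | rfl
    · omega
    · rw [Nat.add_sub_cancel' hsm.le]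
      exact Or.inl hm0
  rcases le_or_gt 0 (height w (s + 1)) with hup | hdown
  · have hpos : ∀ j, s < j → j < m → 0 < height w j := fun j h1 h2 =>
      pos_of_ne_zero_of_sub_one_le (fun j => by linarith [(hstep j).1])
        (lt_of_le_of_ne hup fun h => hne (s + 1) (by omega) (by omega) h.symm) hne j h1 h2
    refine Or.inl (isPosDyckAt_of_height (by omega) (by omega) hs.ge hend fun i hi => ?_)
    rcases hcases i hi with h | h
    · omega
    · linarith [hpos _ h.1 h.2]
  · have hneg : ∀ j, s < j → j < m → 0 < -height w j :=
      pos_of_ne_zero_of_sub_one_le (f := fun j => -height w j)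
        (fun j => by linarith [(hstep j).2]) (by linarith) fun j h1 h2 =>
          neg_ne_zero.mpr (hne j h1 h2)
    refine Or.inr (isNegDyckAt_of_height (by omega) (by omega) hs.le hend fun i hi => ?_)
    rcases hcases i hi with h | h
    · omega
    · linarith [hneg _ h.1 h.2]

lemma exists_isDyckAt_containing (hw : height w w.length = 0) {k : ℕ} (hk : k < w.length) :
    ∃ s l, IsDyckAt w s l ∧ s ≤ k ∧ k < s + l := by
  have hex : ∃ m, k < m ∧ height w m = 0 := ⟨w.length, hk, hw⟩
  set s := Nat.findGreatest (fun j => height w j = 0) k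
  set m := Nat.find hex
  have hsk : s ≤ k := Nat.findGreatest_le k
  have hs : height w s = 0 :=
    Nat.findGreatest_spec (P := fun j => height w j = 0) (Nat.zero_le k) (by simp [height])
  obtain ⟨hkm, hm⟩ : k < m ∧ height w m = 0 := Nat.find_spec hex
  have hmlen : m ≤ w.length := Nat.find_min' hex ⟨hk, hw⟩
  have hne : ∀ j, s < j → j < m → height w j ≠ 0 := by
    intro j hsj hjm hj
    rcases le_or_gt j k with hjk | hkj
    · exact absurd (Nat.le_findGreatest (P := fun j => height w j = 0) hjk hj) (by omega)
    · exact Nat.find_min hex hjm ⟨hkj, hj⟩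
  exact ⟨s, m - s, isDyckAt_of_height_ne_zero (by omega) hmlen hs hm hne, hsk, by omega⟩

/-- A Dyck factor of maximal length among those of the same height containing `(s, l)` is
maximal, since any Dyck factor containing it also contains `(s, l)`. -/
lemma IsDyckAt.exists_mem_DF_containing (hd : IsDyckAt w s l) :
    ∃ p ∈ DF w, p.1 ≤ s ∧ s + l ≤ p.1 + p.2 := by
  let S := (range (w.length + 1) ×ˢ range (w.length + 1)).filter fun p : ℕ × ℕ =>
    IsDyckAt w p.1 p.2 ∧ height w p.1 = height w s ∧ p.1 ≤ s ∧ s + l ≤ p.1 + p.2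
  have hmem : ∀ {p : ℕ × ℕ}, IsDyckAt w p.1 p.2 → height w p.1 = height w s → p.1 ≤ s →
      s + l ≤ p.1 + p.2 → p ∈ S := by
    intro p hp h1 h2 h3
    have := hp.add_le_length
    simp only [S, mem_filter, mem_product, mem_range]
    exact ⟨⟨by omega, by omega⟩, hp, h1, h2, h3⟩
  obtain ⟨p, hpS, hmax⟩ := S.exists_max_image Prod.snd ⟨(s, l), hmem hd rfl le_rfl le_rfl⟩
  obtain ⟨-, hp, hph, hps, hpl⟩ := mem_filter.mp hpS
  refine ⟨p, mem_DF_iff.mpr ⟨hp, fun s' l' hd' hh' hs' hl' => ?_⟩, hps, hpl⟩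
  have := hmax (s', l') (hmem hd' (hh'.trans hph) (hs'.trans hps) (hpl.trans hl'))
  omega

lemma count_le_sum_count_factor_DF (hw : height w w.length = 0) (b : Bool) :
    w.count b ≤ ∑ p ∈ DF w, (factor w p.1 p.2).count b := by
  have hcover : {k ∈ range w.length | w[k]? = some b} ⊆
      (DF w).biUnion fun p => {k ∈ Ico p.1 (p.1 + p.2) | w[k]? = some b} := by
    intro k hk
    obtain ⟨hk, hkb⟩ := mem_filter.mp hk
    obtain ⟨s, l, hd, hsk, hks⟩ := exists_isDyckAt_containing hw (mem_range.mp hk)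
    obtain ⟨p, hp, hps, hpl⟩ := hd.exists_mem_DF_containing
    exact mem_biUnion.mpr ⟨p, hp, mem_filter.mpr ⟨mem_Ico.mpr ⟨by omega, by omega⟩, hkb⟩⟩
  calc w.count b = #{k ∈ range w.length | w[k]? = some b} := by
        rw [← count_take_eq_card, List.take_length]
    _ ≤ #((DF w).biUnion fun p => {k ∈ Ico p.1 (p.1 + p.2) | w[k]? = some b}) :=
        card_le_card hcover
    _ ≤ ∑ p ∈ DF w, #{k ∈ Ico p.1 (p.1 + p.2) | w[k]? = some b} := card_biUnion_le
    _ = ∑ p ∈ DF w, (factor w p.1 p.2).count b := by simp only [count_factor_eq_card]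

end DyckFactors

/-- lower bound `φ_α(w) ≥ (1+n)^α` for every configuration `w ∈ W_{2n}`. -/
theorem phi_lower_bound (α : ℝ) (hα : α ∈ Set.Ioo (0 : ℝ) 1)
    (n : ℕ) (hn : 1 ≤ n) (w : Word) (hw : IsConfig n w) :
    (1 + (n : ℝ)) ^ α ≤ phi α w := by
  have hcount : n ≤ ∑ p ∈ DF w, (factor w p.1 p.2).count true :=
    hw.2 ▸ count_le_sum_count_factor_DF hw.height_length_eq_zero true
  have hDF : (DF w).Nonempty := nonempty_iff_ne_empty.mpr fun h => by
    simp only [h, sum_empty] at hcount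
    omega
  calc (1 + (n : ℝ)) ^ α ≤ (1 + ∑ p ∈ DF w, ((factor w p.1 p.2).count true : ℝ)) ^ α := 
        Real.rpow_le_rpow (by positivity) (by gcongr; exact_mod_cast hcount) hα.1.le
    _ ≤ phi α w := rpow_one_add_sum_le hDF (fun _ _ => by positivity) hα.1.le hα.2.le

end Cooling
end

section
/- For every α ∈ (0,1) and every nonempty positive configuration v (a word over {1,2} with |v|₁ = |v|₂ all of whose prefixes contain at least as many letters 1 as letters 2, i.e., a Dyck word), one has φ_α(v) ≤ (1+|v|₁)^{α+1}. -/
/-! In a Dyck word every prefix has nonnegative height, so no Dyck factor can be negative and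
every Dyck factor starts with a letter `1`. Two maximal Dyck factors with the same start have the
same height and one contains the other, so they coincide. Hence `v` has at most `|v|₁` maximal
Dyck factors, each contributing at most `(1 + |v|₁)^α`. -/

open scoped BigOperators ENNReal

attribute [local instance] Classical.propDecidable

namespace Cooling

open Finset

theorem card_filter_getElem?_eq_count {α : Type*} [DecidableEq α] (l : List α) (a : α) :
    #{i ∈ range l.length | l[i]? = some a} = l.count a := by
  induction l with
  | nil => simp
  | cons b t ih =>
    rw [card_filter, List.length_cons, sum_range_succ']
    simp only [List.getElem?_cons_succ, List.getElem?_cons_zero]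
    rw [← card_filter, ih, List.count_cons]
    simp only [Option.some_inj, beq_iff_eq]

theorem factor_take_one (w : Word) (s : ℕ) {l : ℕ} (hl : 0 < l) :
    (factor w s l).take 1 = w[s]?.toList := by
  rw [factor, List.take_take, min_eq_left hl, List.take_one, List.head?_drop]

theorem IsPosDyckAt.getElem?_eq {w : Word} {s l : ℕ} (h : IsPosDyckAt w s l) :
    w[s]? = some true := by
  obtain ⟨hl, hsl, -, hpref, -⟩ := h
  have hfirst := hpref 1 hl
  rw [factor_take_one w s hl] at hfirst
  rw [List.getElem?_eq_getElem (by omega)] at hfirst ⊢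
  cases hb : w[s] <;> simp [hb] at hfirst ⊢

theorem IsNegDyckAt.getElem?_eq {w : Word} {s l : ℕ} (h : IsNegDyckAt w s l) :
    w[s]? = some false := by
  obtain ⟨hl, hsl, -, hpref, -⟩ := h
  have hfirst := hpref 1 hl
  rw [factor_take_one w s hl] at hfirst
  rw [List.getElem?_eq_getElem (by omega)] at hfirst ⊢
  cases hb : w[s] <;> simp [hb] at hfirst ⊢

theorem not_isNegDyckAt {w : Word}
    (hpre : ∀ i : ℕ, (w.take i).count false ≤ (w.take i).count true) (s l : ℕ) :
    ¬ IsNegDyckAt w s l := by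
  intro h
  have hheight : height w s ≤ 0 := h.2.2.2.2
  have hbefore := hpre s
  have hafter := hpre (s + 1)
  rw [List.take_add_one, h.getElem?_eq, Option.toList_some, List.count_append,
    List.count_append, List.count_singleton_self, List.count_singleton] at hafter
  simp only [height] at hheight
  simp only [beq_iff_eq, Bool.false_eq_true, if_false, add_zero] at hafter
  omega

theorem IsMaxDyckAt.length_eq {w : Word} {s l l' : ℕ} (h : IsMaxDyckAt w s l)
    (h' : IsMaxDyckAt w s l') : l = l' := by
  rcases le_total l l' with hle | hle
  · exact (h.2 s l' h'.1 rfl le_rfl (by omega)).2.symm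
  · exact (h'.2 s l h.1 rfl le_rfl (by omega)).2

theorem card_DF_le_count_true {w : Word}
    (hpre : ∀ i : ℕ, (w.take i).count false ≤ (w.take i).count true) :
    #(DF w) ≤ w.count true := by
  rw [← card_filter_getElem?_eq_count]
  refine card_le_card_of_injOn Prod.fst (fun sl hsl => ?_) (fun a ha b hb hab => ?_)
  · have hmax := (mem_filter.mp hsl).2
    have hstart := hmax.1.resolve_right (not_isNegDyckAt hpre _ _) |>.getElem?_eq
    simp only [coe_filter, mem_range, Set.mem_ofPred_eq, hstart, and_true]
    exact (List.getElem?_eq_some_iff.mp hstart).1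
  · have ha' := (mem_filter.mp ha).2
    have hb' := (mem_filter.mp hb).2
    rw [← hab] at hb'
    exact Prod.ext hab (ha'.length_eq hb')

theorem count_true_factor_le (w : Word) (s l : ℕ) :
    (factor w s l).count true ≤ w.count true :=
  ((List.take_sublist _ _).trans (List.drop_sublist _ _)).count_le true

theorem phi_le_of_positive_general (α : ℝ) (hα : α ∈ Set.Ioo (0 : ℝ) 1)
    (v : Word)
    (hpre : ∀ i : ℕ, (v.take i).count false ≤ (v.take i).count true) :
    phi α v ≤ (1 + (v.count true : ℝ)) ^ (α + 1) := by
  have hterm : ∀ sl ∈ DF v,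
      (1 + ((factor v sl.1 sl.2).count true : ℝ)) ^ α ≤ (1 + (v.count true : ℝ)) ^ α :=
    fun sl _ => Real.rpow_le_rpow (by positivity)
      (by gcongr; exact count_true_factor_le v sl.1 sl.2) hα.1.le
  have hcard : (#(DF v) : ℝ) ≤ v.count true := by exact_mod_cast card_DF_le_count_true hpre
  calc phi α v ≤ #(DF v) • (1 + (v.count true : ℝ)) ^ α := sum_le_card_nsmul _ _ _ hterm
    _ ≤ (1 + (v.count true : ℝ)) * (1 + (v.count true : ℝ)) ^ α := by
        rw [nsmul_eq_mul]; gcongr; linarith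
    _ = (1 + (v.count true : ℝ)) ^ (α + 1) := by
        rw [Real.rpow_add (by positivity), Real.rpow_one, mul_comm]

/-- for a nonempty positive configuration (Dyck word) `v`,
one has `φ_α(v) ≤ (1 + |v|₁)^{α+1}`. -/
theorem phi_le_of_positive (α : ℝ) (hα : α ∈ Set.Ioo (0 : ℝ) 1)
    (v : Word) (hne : v ≠ [])
    (hbal : v.count true = v.count false)
    (hpre : ∀ i : ℕ, (v.take i).count false ≤ (v.take i).count true) :
    phi α v ≤ (1 + (v.count true : ℝ)) ^ (α + 1) :=
  phi_le_of_positive_general α hα v hpre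

end Cooling
end

section
/- For every n ≥ 1, the flip-weighted total volume over all configurations of length 2n satisfies Σ_{w ∈ W_{2n}} F(w)·V(w) = 4^{n−1}·(2n² − n + 1). (Equivalently, this is the coefficient of zⁿ in the generating function (16z³+4z²+2z)/(1−4z)³.) -/
open scoped BigOperators ENNReal

attribute [local instance] Classical.propDecidable

namespace Cooling

/-!
Write `F(w) = ∑ᵢ [wᵢ ≠ wᵢ₊₁]`. For each position `i`, deleting the factor `wᵢwᵢ₊₁ ∈ {12, 21}`
is a bijection onto pairs (letter, configuration `u` of length `l = 2n - 2`), and the height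
profile of `w` is that of `u` with the two values `hᵢ(u) ± 1, hᵢ(u)` inserted after position `i`.
Since `|h + 1| + |h - 1| = 2|h| + 2[h = 0]`, this gives `∑ F·V = 2(l + 3)·T + 2·Z`, where `T` is
the total volume and `Z` the total number of visits to height `0` of the configurations of
length `l`.

Both are computed from tables indexed by the length `l` and final height `d` of arbitrary words,
which satisfy the lattice-path recursion in `l`. With `c(l, d)` the number of such words and
`S(l, d)` the number of words of length `l` ending at height `≥ d`, induction on `l` gives, for
`d ≥ 0` and `l + d` even, `Z(l, d) = 2S(l, d) - c(l, d)` and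
`4T(l, d) = 2(l + d²)S(l, d) - (1 - d)(l - d)c(l, d)`. By the symmetry `1 ↔ 2`,
`2S(l, 0) - c(l, 0) = 2^l`, hence `Z = 2^l` and `4T = l·2^l`.
-/

open Finset

def balance (w : Word) : ℤ := w.count true - w.count false

@[simp] lemma balance_nil : balance [] = 0 := rfl

@[simp] lemma balance_singleton (b : Bool) : balance [b] = if b then 1 else -1 := by
  cases b <;> simp [balance]

lemma balance_append (u v : Word) : balance (u ++ v) = balance u + balance v := by
  simp only [balance, List.count_append]; push_cast; ring

lemma balance_cons (b : Bool) (w : Word) : balance (b :: w) = balance [b] + balance w :=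
  balance_append [b] w

lemma balance_eq_two_mul_count_sub_length (w : Word) :
    balance w = 2 * w.count true - w.length := by
  have h : w.count true + w.count false = w.length := by simp
  simp only [balance]; omega

lemma balance_map_not (w : Word) : balance (w.map not) = -balance w := by
  have h (b : Bool) : (w.map not).count b = w.count !b := by
    simpa using List.count_map_of_injective w not Bool.not_injective !b
  simp only [balance, h, Bool.not_true, Bool.not_false]; ring

lemma height_eq_balance_take (w : Word) (k : ℕ) : height w k = balance (w.take k) := rfl

def words (l : ℕ) : Finset Word := (univ : Finset (Fin l → Bool)).image List.ofFn

lemma mem_words {l : ℕ} {w : Word} : w ∈ words l ↔ w.length = l := by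
  constructor
  · intro h
    obtain ⟨f, -, rfl⟩ := mem_image.mp h
    exact List.length_ofFn
  · rintro rfl
    exact mem_image.mpr ⟨w.get, mem_univ _, List.ofFn_get w⟩

lemma words_zero : words 0 = {[]} := by
  ext w; simp [mem_words]

lemma card_words (l : ℕ) : #(words l) = 2 ^ l := by
  rw [words, card_image_of_injective _ List.ofFn_injective]
  simp

lemma sum_words_succ {M : Type*} [AddCommMonoid M] (l : ℕ) (f : Word → M) :
    ∑ w ∈ words (l + 1), f w = ∑ w ∈ words l, (f (w ++ [true]) + f (w ++ [false])) := by
  simp only [words, sum_image fun _ _ _ _ h => List.ofFn_injective h]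
  rw [← (Fin.snocEquiv fun _ => Bool).sum_comp, Fintype.sum_prod_type, Fintype.sum_bool,
    ← sum_add_distrib]
  refine sum_congr rfl fun x _ => ?_
  simp only [Fin.snocEquiv, Equiv.coe_fn_mk, List.ofFn_succ' (Fin.snoc x _),
    Fin.snoc_castSucc, Fin.snoc_last, List.concat_eq_append]

lemma sum_words_map_not {M : Type*} [AddCommMonoid M] (l : ℕ) (f : Word → M) :
    ∑ w ∈ words l, f (w.map not) = ∑ w ∈ words l, f w := by
  refine sum_nbij' (List.map not) (List.map not) ?_ ?_ ?_ ?_ fun _ _ => rfl <;>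
    simp [mem_words, Function.comp_def]

def heightSum (g : ℤ → ℤ) (w : Word) : ℤ := ∑ k ∈ range (w.length + 1), g (height w k)

lemma height_append_of_le {p : Word} {k : ℕ} (v : Word) (hk : k ≤ p.length) :
    height (p ++ v) k = height p k := by
  rw [height_eq_balance_take, height_eq_balance_take, List.take_append_of_le_length hk]

lemma height_append_length_add (p v : Word) (j : ℕ) :
    height (p ++ v) (p.length + j) = balance p + height v j := by
  rw [height_eq_balance_take, List.take_length_add_append, balance_append, height_eq_balance_take]

lemma height_of_length_le {w : Word} {k : ℕ} (hk : w.length ≤ k) : height w k = balance w := by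
  rw [height_eq_balance_take, List.take_of_length_le hk]

lemma heightSum_append (g : ℤ → ℤ) (p v : Word) :
    heightSum g (p ++ v) + g (balance p) =
      heightSum g p + heightSum (fun x => g (balance p + x)) v := by
  have hp : heightSum g p = ∑ k ∈ range p.length, g (height p k) + g (balance p) := by
    rw [heightSum, sum_range_succ, height_of_length_le le_rfl]
  have hpv : heightSum g (p ++ v) =
      ∑ k ∈ range p.length, g (height p k) + heightSum (fun x => g (balance p + x)) v := by
    rw [heightSum, List.length_append, add_assoc, sum_range_add]
    congr 1
    · exact sum_congr rfl fun k hk => by rw [height_append_of_le v (mem_range.mp hk).le]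
    · simp only [heightSum, height_append_length_add]
  rw [hp, hpv]
  ring

lemma heightSum_singleton (g : ℤ → ℤ) (b : Bool) :
    heightSum g [b] = g 0 + g (balance [b]) := by
  simp [heightSum, sum_range_succ, height_eq_balance_take]

lemma heightSum_append_singleton (g : ℤ → ℤ) (w : Word) (b : Bool) :
    heightSum g (w ++ [b]) = heightSum g w + g (balance w + balance [b]) := by
  have h := heightSum_append g w [b]
  rw [heightSum_singleton, add_zero] at h
  linear_combination h

lemma heightSum_cons (g : ℤ → ℤ) (b : Bool) (v : Word) :
    heightSum g (b :: v) = g 0 + heightSum (fun x => g (balance [b] + x)) v := by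
  have h := heightSum_append g [b] v
  rw [heightSum_singleton, List.singleton_append] at h
  linear_combination h

lemma heightSum_map_not (g : ℤ → ℤ) (w : Word) :
    heightSum g (w.map not) = heightSum (fun x => g (-x)) w := by
  simp only [heightSum, List.length_map, height_eq_balance_take, ← List.map_take, balance_map_not]

section Tables

variable (g : ℤ → ℤ) (l : ℕ) (d : ℤ)

def pathCount : ℤ := #{w ∈ words l | balance w = d}

def tailCount : ℤ := #{w ∈ words l | d ≤ balance w}

def heightTable : ℤ := ∑ w ∈ words l with balance w = d, heightSum g w

lemma sum_filter_words_succ {M : Type*} [AddCommMonoid M] (P : ℤ → Prop) [DecidablePred P]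
    (f : Word → M) :
    ∑ w ∈ words (l + 1) with P (balance w), f w =
      ∑ w ∈ words l with P (balance w + 1), f (w ++ [true]) +
        ∑ w ∈ words l with P (balance w - 1), f (w ++ [false]) := by
  simp only [sum_filter, sum_words_succ, sum_add_distrib, balance_append, balance_singleton]
  rfl

lemma sum_filter_words_map_not {M : Type*} [AddCommMonoid M] (P : ℤ → Prop) [DecidablePred P]
    (f : Word → M) :
    ∑ w ∈ words l with P (balance w), f w = ∑ w ∈ words l with P (-balance w), f (w.map not) := by
  simp only [sum_filter, ← balance_map_not]
  exact (sum_words_map_not l fun w => if P (balance w) then f w else 0).symm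

lemma pathCount_succ : pathCount (l + 1) d = pathCount l (d - 1) + pathCount l (d + 1) := by
  simp only [pathCount, card_eq_sum_ones]
  rw [sum_filter_words_succ l (· = d)]
  simp only [← eq_sub_iff_add_eq, sub_eq_iff_eq_add]
  push_cast; rfl

lemma tailCount_succ : tailCount (l + 1) d = tailCount l (d - 1) + tailCount l (d + 1) := by
  simp only [tailCount, card_eq_sum_ones, sum_filter_words_succ, ← sub_le_iff_le_add,
    le_sub_iff_add_le]
  push_cast; rfl

lemma heightTable_succ :
    heightTable g (l + 1) d = heightTable g l (d - 1) + heightTable g l (d + 1) +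
      g d * pathCount (l + 1) d := by
  have append_last (e : ℤ) (b : Bool) (he : e + balance [b] = d) :
      ∑ w ∈ words l with balance w = e, heightSum g (w ++ [b]) =
        heightTable g l e + g d * pathCount l e := by
    rw [sum_congr rfl fun w hw => by
      rw [heightSum_append_singleton, (mem_filter.mp hw).2, he], sum_add_distrib, sum_const,
      nsmul_eq_mul, mul_comm, heightTable, pathCount]
  rw [heightTable, sum_filter_words_succ l (· = d), pathCount_succ]
  simp only [← eq_sub_iff_add_eq, sub_eq_iff_eq_add]
  rw [append_last (d - 1) true (by simp), append_last (d + 1) false (by simp)]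
  ring

lemma pathCount_zero : pathCount 0 d = if d = 0 then 1 else 0 := by
  by_cases h : d = 0 <;> simp [pathCount, words_zero, filter_singleton, h, eq_comm]

lemma tailCount_zero : tailCount 0 d = if d ≤ 0 then 1 else 0 := by
  by_cases h : d ≤ 0 <;> simp [tailCount, words_zero, filter_singleton, h]

lemma heightTable_zero : heightTable g 0 d = if d = 0 then g 0 else 0 := by
  by_cases h : d = 0 <;>
    simp [heightTable, words_zero, filter_singleton, heightSum, height, h, eq_comm]

lemma pathCount_neg : pathCount l (-d) = pathCount l d := by
  rw [pathCount, pathCount, card_eq_sum_ones, card_eq_sum_ones,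
    sum_filter_words_map_not l (· = -d)]
  simp only [neg_inj]

lemma heightTable_neg (hg : ∀ x, g (-x) = g x) :
    heightTable g l (-d) = heightTable g l d := by
  rw [heightTable, sum_filter_words_map_not l (· = -d)]
  simp only [neg_inj, heightSum_map_not, hg]
  rfl

lemma pathCount_eq_zero_of_odd (h : Odd ((l : ℤ) + d)) : pathCount l d = 0 := by
  rw [pathCount, Nat.cast_eq_zero, card_eq_zero, filter_eq_empty_iff]
  rintro w hw rfl
  rw [balance_eq_two_mul_count_sub_length, mem_words.mp hw] at h
  exact Int.not_even_iff_odd.mpr h ⟨w.count true, by ring⟩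

lemma tailCount_eq_pathCount_add : tailCount l d = pathCount l d + tailCount l (d + 1) := by
  rw [tailCount, ← card_filter_add_card_filter_not (fun w => balance w = d), filter_filter,
    filter_filter, pathCount, tailCount, Nat.cast_add]
  congr 3 <;> refine filter_congr fun w _ => ?_ <;> omega

lemma two_mul_tailCount_zero_sub_pathCount_zero : 2 * tailCount l 0 - pathCount l 0 = 2 ^ l := by
  have hsplit : tailCount l 0 + #{w ∈ words l | ¬ 0 ≤ balance w} = 2 ^ l := by
    rw [tailCount, ← Nat.cast_add, card_filter_add_card_filter_not, card_words]; norm_num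
  have hneg : tailCount l 1 = #{w ∈ words l | ¬ 0 ≤ balance w} := by
    rw [tailCount, card_eq_sum_ones, card_eq_sum_ones, sum_filter_words_map_not l (1 ≤ ·)]
    congr 2
    refine filter_congr fun w _ => ?_
    omega
  have hstep := tailCount_eq_pathCount_add l 0
  rw [zero_add] at hstep
  linear_combination hstep + hneg + hsplit

/-- With `k = (l + d - 1) / 2`, this is `(l - k) * l.choose k = (k + 1) * l.choose (k + 1)`. -/
lemma mul_pathCount_sub_one_eq :
    ((l : ℤ) + 1 - d) * pathCount l (d - 1) = (l + 1 + d) * pathCount l (d + 1) := by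
  induction l generalizing d with
  | zero => simp only [pathCount_zero]; split_ifs <;> omega
  | succ l ih =>
    rw [pathCount_succ, pathCount_succ]
    have h₁ := ih (d - 1)
    have h₂ := ih (d + 1)
    simp only [sub_add_cancel, add_sub_cancel_right, show d - 1 - 1 = d - 2 by ring,
      show d + 1 + 1 = d + 2 by ring] at h₁ h₂ ⊢
    push_cast
    linear_combination h₁ + h₂

end Tables

lemma heightTable_indicator_zero_eq {l : ℕ} {d : ℤ} (hd : 0 ≤ d) (hpar : Even ((l : ℤ) + d)) :
    heightTable (fun h => if h = 0 then 1 else 0) l d = 2 * tailCount l d - pathCount l d := by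
  induction l generalizing d with
  | zero =>
    rw [heightTable_zero, tailCount_zero, pathCount_zero]
    obtain rfl | hpos := hd.eq_or_lt
    · simp
    · simp [hpos.ne', hpos.not_ge]
  | succ l ih =>
    rw [heightTable_succ, tailCount_succ, pathCount_succ]
    obtain rfl | hpos := hd.eq_or_lt
    · have hodd : Odd ((l : ℤ) + 0) := by grind
      have h₁ := ih zero_le_one (by grind)
      have h₂ := tailCount_eq_pathCount_add l (-1)
      have h₃ := tailCount_eq_pathCount_add l 0
      have hsym : heightTable (fun h => if h = 0 then 1 else 0) l (-1) =
          heightTable (fun h => if h = 0 then 1 else 0) l 1 :=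
        heightTable_neg _ l 1 fun x => by simp
      simp only [zero_sub, zero_add, if_true, neg_add_cancel, pathCount_neg,
        pathCount_eq_zero_of_odd l 0 hodd] at h₂ h₃ ⊢
      linear_combination hsym + 2 * h₁ - 2 * h₂ - 2 * h₃
    · have h₁ := @ih (d - 1) (by omega) (by grind)
      have h₂ := @ih (d + 1) (by omega) (by grind)
      rw [h₁, h₂, if_neg hpos.ne']
      ring

lemma four_mul_heightTable_abs_eq {l : ℕ} {d : ℤ} (hd : 0 ≤ d) (hpar : Even ((l : ℤ) + d)) :
    4 * heightTable abs l d =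
      2 * (l + d ^ 2) * tailCount l d - (1 - d) * (l - d) * pathCount l d := by
  induction l generalizing d with
  | zero =>
    rw [heightTable_zero, tailCount_zero, pathCount_zero]
    obtain rfl | hpos := hd.eq_or_lt
    · simp
    · simp [hpos.ne', hpos.not_ge]
  | succ l ih =>
    rw [heightTable_succ, tailCount_succ, pathCount_succ]
    have e₁ := tailCount_eq_pathCount_add l (d - 1)
    have e₂ := tailCount_eq_pathCount_add l d
    rw [sub_add_cancel] at e₁
    have hodd : Odd ((l : ℤ) + d) := by grind
    have hz := pathCount_eq_zero_of_odd l d hodd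
    obtain rfl | hpos := hd.eq_or_lt
    · have h₁ := ih zero_le_one (by grind)
      have hsym : heightTable abs l (-1) = heightTable abs l 1 := heightTable_neg abs l 1 abs_neg
      have hc := pathCount_neg l 1
      simp only [zero_sub, zero_add, abs_zero, zero_mul, add_zero] at h₁ e₁ e₂ hz ⊢
      push_cast
      linear_combination 4 * hsym + 2 * h₁ - 2 * (l + 1) * (e₁ + e₂ + hz) - (l + 1) * hc
    · have h₁ := @ih (d - 1) (by omega) (by grind)
      have h₂ := @ih (d + 1) (by omega) (by grind)
      have hr := mul_pathCount_sub_one_eq l d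
      rw [abs_of_pos hpos]
      push_cast
      linear_combination h₁ + h₂ - 4 * d * (e₁ + e₂ + hz) - hr

lemma flipCount_cons_cons (a b : Bool) (t : Word) :
    flipCount (a :: b :: t) = (if a ≠ b then 1 else 0) + flipCount (b :: t) := by
  cases a <;> cases b <;> simp [flipCount] <;> omega

lemma flipCount_eq_sum : ∀ w : Word,
    flipCount w = ∑ i ∈ range (w.length - 1), if w[i]? ≠ w[i + 1]? then 1 else 0
  | [] => rfl
  | [_] => rfl
  | a :: b :: t => by
    rw [flipCount_cons_cons, flipCount_eq_sum (b :: t)]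
    simp [sum_range_succ', add_comm]

def insertPair (i : ℕ) (a : Bool) (u : Word) : Word := u.take i ++ a :: (!a) :: u.drop i

def deletePair (i : ℕ) (w : Word) : Word := w.take i ++ w.drop (i + 2)

lemma length_insertPair (i : ℕ) (a : Bool) {u : Word} (hi : i ≤ u.length) :
    (insertPair i a u).length = u.length + 2 := by
  simp [insertPair]; omega

lemma balance_insertPair (i : ℕ) (a : Bool) (u : Word) :
    balance (insertPair i a u) = balance u := by
  have h := balance_append (u.take i) (u.drop i)
  rw [List.take_append_drop] at h
  rw [insertPair, balance_append, balance_cons, balance_cons _ (u.drop i), h]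
  cases a <;> simp

lemma getElem?_insertPair (i : ℕ) (a : Bool) {u : Word} (hi : i ≤ u.length) :
    (insertPair i a u)[i]? = some a ∧ (insertPair i a u)[i + 1]? = some !a := by
  have h : (u.take i).length = i := by simpa using hi
  simp [insertPair, h]

lemma deletePair_insertPair (a : Bool) {i : ℕ} {u : Word} (hi : i ≤ u.length) :
    deletePair i (insertPair i a u) = u := by
  have h : (u.take i).length = i := by simpa using hi
  simp [deletePair, insertPair, List.drop_append, h, List.drop_eq_nil_of_le]

lemma insertPair_deletePair {i : ℕ} {w : Word} (hi : i + 1 < w.length) (hne : w[i]? ≠ w[i + 1]?) :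
    insertPair i (w.getD i false) (deletePair i w) = w := by
  have hlen : (w.take i).length = i := by simp; omega
  have hne' : w[i + 1] = !w[i] := by
    rw [List.getElem?_eq_getElem (by omega), List.getElem?_eq_getElem hi] at hne
    exact Bool.eq_not_of_ne fun h => hne (by rw [h])
  have hdrop : w.drop i = w[i] :: (!w[i]) :: w.drop (i + 2) := by
    rw [List.drop_eq_getElem_cons (by omega), List.drop_eq_getElem_cons hi, hne']
  rw [insertPair, deletePair, List.take_append_of_le_length hlen.ge, List.take_take, min_self,
    List.drop_append_of_le_length hlen.ge, List.drop_of_length_le (le_of_eq hlen),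
    List.getD_eq_getElem w false (by omega), List.nil_append, ← hdrop, List.take_append_drop]

lemma heightSum_insertPair (g : ℤ → ℤ) (i : ℕ) (a : Bool) (u : Word) :
    heightSum g (insertPair i a u) =
      heightSum g u + g (height u i) + g (height u i + balance [a]) := by
  have h₁ := heightSum_append g (u.take i) (a :: (!a) :: u.drop i)
  have h₂ := heightSum_append g (u.take i) (u.drop i)
  rw [List.take_append_drop] at h₂
  have hcancel (x : ℤ) : balance [a] + (balance [!a] + x) = x := by cases a <;> simp
  simp only [heightSum_cons, hcancel, add_zero] at h₁
  rw [insertPair, height_eq_balance_take]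
  linear_combination h₁ - h₂

lemma sum_insertPair_eq_sum_filter {i l : ℕ} (hil : i ≤ l) (f : Word → ℤ) :
    ∑ a : Bool, ∑ u ∈ words l with balance u = 0, f (insertPair i a u) =
      ∑ w ∈ words (l + 2) with balance w = 0 ∧ w[i]? ≠ w[i + 1]?, f w := by
  rw [← sum_product']
  refine sum_nbij' (fun p => insertPair i p.1 p.2) (fun w => (w.getD i false, deletePair i w))
    ?_ ?_ ?_ ?_ fun _ _ => rfl
  · rintro ⟨a, u⟩ hu
    simp only [mem_product, mem_univ, mem_filter, mem_words, true_and] at hu ⊢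
    obtain ⟨hlen, hbal⟩ := hu
    obtain ⟨h₁, h₂⟩ := getElem?_insertPair i a (hlen ▸ hil)
    refine ⟨?_, ?_, ?_⟩
    · rw [length_insertPair i a (hlen ▸ hil), hlen]
    · rw [balance_insertPair, hbal]
    · simp [h₁, h₂]
  · intro w hw
    simp only [mem_filter, mem_words] at hw
    obtain ⟨hlen, hbal, hne⟩ := hw
    have hinv := congrArg balance (insertPair_deletePair (by omega) hne)
    rw [balance_insertPair] at hinv
    simp only [mem_product, mem_univ, mem_filter, mem_words, true_and]
    exact ⟨by simp [deletePair]; omega, hinv.trans hbal⟩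
  · rintro ⟨a, u⟩ hu
    simp only [mem_product, mem_univ, mem_filter, mem_words, true_and] at hu
    have hiu : i ≤ u.length := hu.1 ▸ hil
    simp [List.getD_eq_getElem?_getD, (getElem?_insertPair i a hiu).1,
      deletePair_insertPair a hiu]
  · intro w hw
    simp only [mem_filter, mem_words] at hw
    exact insertPair_deletePair (by omega) hw.2.2

lemma sum_flipCount_mul_eq_sum_insertPair (l : ℕ) (f : Word → ℤ) :
    ∑ w ∈ words (l + 2) with balance w = 0, flipCount w * f w =
      ∑ i ∈ range (l + 1), ∑ a : Bool, ∑ u ∈ words l with balance u = 0,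
        f (insertPair i a u) := by
  have hflip (w : Word) (hw : w ∈ words (l + 2)) : (flipCount w : ℤ) * f w =
      ∑ i ∈ range (l + 1), if w[i]? ≠ w[i + 1]? then f w else 0 := by
    rw [flipCount_eq_sum, mem_words.mp hw, show l + 2 - 1 = l + 1 by omega, Nat.cast_sum, sum_mul]
    exact sum_congr rfl fun i _ => by split_ifs <;> simp
  rw [sum_congr rfl fun w hw => hflip w (mem_filter.mp hw).1, sum_comm]
  refine sum_congr rfl fun i hi => ?_
  rw [sum_insertPair_eq_sum_filter (Nat.lt_succ_iff.mp (mem_range.mp hi)), ← sum_filter,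
    filter_filter]

lemma abs_add_one_add_abs_add_neg_one (x : ℤ) :
    |x + 1| + |x + -1| = 2 * |x| + 2 * if x = 0 then 1 else 0 := by
  split_ifs with h
  · simp [h]
  · rcases lt_or_gt_of_ne h with h | h
    · rw [abs_of_neg h, abs_of_nonpos (by omega), abs_of_neg (by omega)]; ring
    · rw [abs_of_pos h, abs_of_pos (by omega), abs_of_nonneg (by omega)]; ring

lemma sum_insertPair_heightSum_abs (u : Word) :
    ∑ i ∈ range (u.length + 1), ∑ a : Bool, heightSum abs (insertPair i a u) =
      2 * (u.length + 3) * heightSum abs u +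
        2 * heightSum (fun h => if h = 0 then 1 else 0) u := by
  simp only [Fintype.sum_bool, heightSum_insertPair, balance_singleton, if_true,
    Bool.false_eq_true, if_false]
  have hpt (h : ℤ) : heightSum abs u + |h| + |h + 1| + (heightSum abs u + |h| + |h + -1|) =
      2 * heightSum abs u + 4 * |h| + 2 * (if h = 0 then 1 else 0) := by
    linear_combination abs_add_one_add_abs_add_neg_one h
  simp only [hpt, sum_add_distrib, sum_const, card_range, ← mul_sum, nsmul_eq_mul]
  simp only [heightSum]
  push_cast
  ring

lemma sum_flipCount_mul_heightSum_abs (l : ℕ) :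
    ∑ w ∈ words (l + 2) with balance w = 0, flipCount w * heightSum abs w =
      2 * (l + 3) * heightTable abs l 0 +
        2 * heightTable (fun h => if h = 0 then 1 else 0) l 0 := by
  rw [sum_flipCount_mul_eq_sum_insertPair]
  simp only [sum_comm (s := (univ : Finset Bool))]
  rw [sum_comm, heightTable, heightTable, mul_sum, mul_sum, ← sum_add_distrib]
  refine sum_congr rfl fun u hu => ?_
  rw [← (mem_words.mp (mem_filter.mp hu).1), sum_insertPair_heightSum_abs]

lemma four_mul_heightTable_abs_zero_of_even {l : ℕ} (hl : Even l) :
    4 * heightTable abs l 0 = l * 2 ^ l := by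
  rw [four_mul_heightTable_abs_eq le_rfl (by simpa using hl)]
  linear_combination l * two_mul_tailCount_zero_sub_pathCount_zero l

lemma heightTable_indicator_zero_zero_of_even {l : ℕ} (hl : Even l) :
    heightTable (fun h => if h = 0 then 1 else 0) l 0 = 2 ^ l := by
  rw [heightTable_indicator_zero_eq le_rfl (by simpa using hl),
    two_mul_tailCount_zero_sub_pathCount_zero]

lemma height_add_one {w : Word} {k : ℕ} (hk : k < w.length) :
    height w (k + 1) = height w k + balance [w[k]] := by
  rw [height_eq_balance_take, List.take_add_one, List.getElem?_eq_getElem hk, Option.toList_some,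
    balance_append, height_eq_balance_take]

lemma volume_eq_heightSum_abs {w : Word} (hw : balance w = 0) : volume w = heightSum abs w := by
  have hstep (k : ℕ) (hk : k < w.length) :
      |height w k + height w (k + 1)| = |height w k| + |height w (k + 1)| := by
    rw [abs_add_eq_add_abs_iff, height_add_one hk]
    cases w[k] <;> simp <;> omega
  have hsum := sum_range_succ (fun k => |height w k|) w.length
  have hsum' := sum_range_succ' (fun k => |height w k|) w.length
  rw [height_of_length_le le_rfl, hw] at hsum
  simp only [height_eq_balance_take w 0, List.take_zero, balance_nil, abs_zero, add_zero]
    at hsum hsum'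
  have hint : ∑ k ∈ range w.length, |height w k + height w (k + 1)| = 2 * heightSum abs w := by
    rw [sum_congr rfl fun k hk => hstep k (mem_range.mp hk), sum_add_distrib, heightSum]
    linear_combination -hsum - hsum'
  rw [volume]
  simp only [← Int.cast_abs, ← Int.cast_sum, hint]
  push_cast
  ring

lemma configSet_eq (n : ℕ) : configSet n = {w ∈ words (2 * n) | balance w = 0} := by
  refine filter_congr fun w hw => ?_
  rw [balance_eq_two_mul_count_sub_length, mem_words.mp hw]
  omega

/-- the flip-weighted total volume over all configurations of length
`2n` is `4^{n-1} (2n² - n + 1)`. -/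
theorem flip_weighted_total_volume (n : ℕ) (hn : 1 ≤ n) :
    ∑ w ∈ configSet n, (flipCount w : ℝ) * volume w
      = 4 ^ (n - 1) * (2 * (n : ℝ) ^ 2 - (n : ℝ) + 1) := by
  obtain ⟨m, rfl⟩ : ∃ m, n = m + 1 := ⟨n - 1, by omega⟩
  have hsum := sum_flipCount_mul_heightSum_abs (2 * m)
  have habs := four_mul_heightTable_abs_zero_of_even (even_two_mul m)
  have hzero := heightTable_indicator_zero_zero_of_even (even_two_mul m)
  rw [pow_mul] at habs hzero
  rw [configSet_eq, show 2 * (m + 1) = 2 * m + 2 by ring, Nat.add_sub_cancel,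
    sum_congr rfl fun w hw => by rw [volume_eq_heightSum_abs (mem_filter.mp hw).2]]
  have hsumR := congrArg (Int.cast : ℤ → ℝ) hsum
  have habsR := congrArg (Int.cast : ℤ → ℝ) habs
  have hzeroR := congrArg (Int.cast : ℤ → ℝ) hzero
  push_cast at hsumR habsR hzeroR ⊢
  linear_combination hsumR + (2 * m + 3) / 2 * habsR + 2 * hzeroR

end Cooling
end

section
/- For every real α ∈ (0,1) and every real x ≥ 1, one has (x+1)^α + (x−1)^α − 2x^α ≤ α(α−1)·x^{α−2}. -/
/-!
Put `f(s) = s^α`, so `f''(s) = α(α-1) s^p` with `p = α-2 < 0`. By AM-GM,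
`(x+t)^p + (x-t)^p ≥ 2((x+t)(x-t))^(p/2) ≥ 2 x^p`, and since `α(α-1) < 0` this gives
`f''(x+t) + f''(x-t) ≤ 2 f''(x)`. Hence
`g(t) = f'(x+t) - f'(x-t) - 2 f''(x) t` is nonincreasing with `g(0) = 0`, and
`ψ(t) = f(x+t) + f(x-t) - 2 f(x) - f''(x) t²`, whose derivative is `g`, is nonincreasing with
`ψ(0) = 0`; the claim is `ψ(1) ≤ 0`.
-/

open Set Real

lemma le_of_hasDerivAt_nonpos {φ φ' : ℝ → ℝ} {a b : ℝ} (hab : a ≤ b)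
    (hφ : ContinuousOn φ (Icc a b)) (hderiv : ∀ t ∈ Ioo a b, HasDerivAt φ (φ' t) t)
    (hnonpos : ∀ t ∈ Ioo a b, φ' t ≤ 0) : φ b ≤ φ a :=
  antitoneOn_of_hasDerivWithinAt_nonpos (convex_Icc a b) hφ
    (by rw [interior_Icc]; exact fun t ht ↦ (hderiv t ht).hasDerivWithinAt)
    (by rwa [interior_Icc]) ⟨le_rfl, hab⟩ ⟨hab, le_rfl⟩ hab

theorem add_sub_two_mul_le_mul_sq_of_deriv2 {f f' f'' : ℝ → ℝ} {x h : ℝ} (hh : 0 < h)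
    (hf : ContinuousOn f (Icc (x - h) (x + h)))
    (hf' : ∀ s ∈ Ioo (x - h) (x + h), HasDerivAt f (f' s) s)
    (hf'' : ∀ s ∈ Ioo (x - h) (x + h), HasDerivAt f' (f'' s) s)
    (hmid : ∀ t ∈ Ioo 0 h, f'' (x + t) + f'' (x - t) ≤ 2 * f'' x) :
    f (x + h) + f (x - h) - 2 * f x ≤ f'' x * h ^ 2 := by
  have hplus : ∀ t ∈ Ico 0 h, x + t ∈ Ioo (x - h) (x + h) := fun t ⟨h0, h1⟩ ↦
    ⟨by linarith, by linarith⟩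
  have hminus : ∀ t ∈ Ico 0 h, x - t ∈ Ioo (x - h) (x + h) := fun t ⟨h0, h1⟩ ↦
    ⟨by linarith, by linarith⟩
  set g : ℝ → ℝ := fun t ↦ f' (x + t) - f' (x - t) - 2 * f'' x * t
  have hg_deriv : ∀ t ∈ Ico 0 h,
      HasDerivAt g (f'' (x + t) + f'' (x - t) - 2 * f'' x) t := by
    intro t ht
    refine ((((hf'' _ (hplus t ht)).comp_const_add x t).sub
      ((hf'' _ (hminus t ht)).comp_const_sub x t)).sub
      ((hasDerivAt_id t).const_mul (2 * f'' x))).congr_deriv ?_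
    ring
  have hg_nonpos : ∀ t ∈ Ico 0 h, g t ≤ 0 := by
    intro t ht
    have hsub : Icc 0 t ⊆ Ico 0 h := Icc_subset_Ico_right ht.2
    have := le_of_hasDerivAt_nonpos ht.1
      (fun s hs ↦ (hg_deriv s (hsub hs)).continuousAt.continuousWithinAt)
      (fun s hs ↦ hg_deriv s (hsub (Ioo_subset_Icc_self hs)))
      (fun s hs ↦ by linarith [hmid s ⟨hs.1, hs.2.trans ht.2⟩])
    simpa [g] using this
  set ψ : ℝ → ℝ := fun t ↦ f (x + t) + f (x - t) - 2 * f x - f'' x * t ^ 2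
  have hψ_cont : ContinuousOn ψ (Icc 0 h) := by
    have hplus' : MapsTo (fun t ↦ x + t) (Icc 0 h) (Icc (x - h) (x + h)) :=
      fun t ⟨h0, h1⟩ ↦ ⟨by linarith, by linarith⟩
    have hminus' : MapsTo (fun t ↦ x - t) (Icc 0 h) (Icc (x - h) (x + h)) :=
      fun t ⟨h0, h1⟩ ↦ ⟨by linarith, by linarith⟩
    exact (((hf.comp (by fun_prop) hplus').add (hf.comp (by fun_prop) hminus')).sub
      continuousOn_const).sub (by fun_prop)
  have hψ_deriv : ∀ t ∈ Ioo 0 h, HasDerivAt ψ (g t) t := by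
    intro t ht
    have ht' : t ∈ Ico 0 h := Ioo_subset_Ico_self ht
    refine (((((hf' _ (hplus t ht')).comp_const_add x t).add
      ((hf' _ (hminus t ht')).comp_const_sub x t)).sub_const (2 * f x)).sub
      ((hasDerivAt_pow 2 t).const_mul (f'' x))).congr_deriv ?_
    simp only [g]
    ring
  have := le_of_hasDerivAt_nonpos hh.le hψ_cont hψ_deriv
    (fun t ht ↦ hg_nonpos t (Ioo_subset_Ico_self ht))
  simp only [ψ, add_zero, sub_zero] at this
  linarith

lemma two_mul_rpow_le_rpow_add_rpow {a b x p : ℝ} (hp : p ≤ 0) (ha : 0 < a) (hb : 0 < b)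
    (hx : 0 ≤ x) (hab : a * b ≤ x ^ 2) : 2 * x ^ p ≤ a ^ p + b ^ p := by
  have hsq : ∀ {c : ℝ}, 0 ≤ c → (c ^ (p / 2)) ^ 2 = c ^ p := fun hc ↦ by
    rw [← rpow_natCast, ← rpow_mul hc]; ring_nf
  calc 2 * x ^ p = 2 * (x ^ 2) ^ (p / 2) := by rw [← rpow_natCast, ← rpow_mul hx]; ring_nf
    _ ≤ 2 * (a * b) ^ (p / 2) := by
      gcongr ?_ * ?_
      exact rpow_le_rpow_of_nonpos (mul_pos ha hb) hab (by linarith)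
    _ = 2 * a ^ (p / 2) * b ^ (p / 2) := by rw [mul_rpow ha.le hb.le, mul_assoc]
    _ ≤ (a ^ (p / 2)) ^ 2 + (b ^ (p / 2)) ^ 2 := two_mul_le_add_sq _ _
    _ = a ^ p + b ^ p := by rw [hsq ha.le, hsq hb.le]

/-- for `α ∈ (0,1)` and `x ≥ 1`,
`(x+1)^α + (x-1)^α - 2 x^α ≤ α (α-1) x^{α-2}` (real powers). -/
theorem concavity_second_difference (α : ℝ) (hα : α ∈ Set.Ioo (0 : ℝ) 1)
    (x : ℝ) (hx : 1 ≤ x) :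
    (x + 1) ^ α + (x - 1) ^ α - 2 * x ^ α ≤ α * (α - 1) * x ^ (α - 2) := by
  obtain ⟨hα0, hα1⟩ := hα
  have hpos : ∀ s ∈ Ioo (x - 1) (x + 1), s ≠ 0 := fun s hs ↦ by linarith [hs.1]
  have hcoeff : α * (α - 1) ≤ 0 := mul_nonpos_of_nonneg_of_nonpos hα0.le (by linarith)
  have hmid : ∀ t ∈ Ioo (0 : ℝ) 1,
      2 * x ^ (α - 2) ≤ (x + t) ^ (α - 2) + (x - t) ^ (α - 2) :=
    fun t ht ↦ two_mul_rpow_le_rpow_add_rpow (by linarith) (by linarith [ht.1])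
      (by linarith [ht.2]) (by linarith) (by nlinarith [sq_nonneg t])
  have key := add_sub_two_mul_le_mul_sq_of_deriv2 (f := fun s ↦ s ^ α)
    (f' := fun s ↦ α * s ^ (α - 1)) (f'' := fun s ↦ α * (α - 1) * s ^ (α - 2)) one_pos
    (continuous_rpow_const hα0.le).continuousOn
    (fun s hs ↦ hasDerivAt_rpow_const (Or.inl (hpos s hs)))
    (fun s hs ↦ ((hasDerivAt_rpow_const (Or.inl (hpos s hs))).const_mul α).congr_deriv
      (by rw [sub_sub, one_add_one_eq_two, mul_assoc]))
    (fun t ht ↦ by linarith [mul_le_mul_of_nonpos_left (hmid t ht) hcoeff])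
  simpa using key
end

section
/- For every real α ∈ (0,1) and every integer n ≥ 2, one has (2·(3^α − 2^α) − 2^α)/3 ≤ −(α(1−α)/2)·n^{α−2}, i.e., 2·3^α − 3·2^α ≤ −(3α(1−α)/2)·n^{α−2}. -/
/-- for `α ∈ (0,1)` and every integer `n ≥ 2`,
`(2(3^α - 2^α) - 2^α)/3 ≤ -(α(1-α)/2) n^{α-2}` (real powers). -/
theorem irreversible_flip_bound (α : ℝ) (hα : α ∈ Set.Ioo (0 : ℝ) 1)
    (n : ℕ) (hn : 2 ≤ n) :
    (2 * ((3 : ℝ) ^ α - (2 : ℝ) ^ α) - (2 : ℝ) ^ α) / 3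
      ≤ -(α * (1 - α) / 2) * (n : ℝ) ^ (α - 2) := by
  obtain ⟨hα0, hα1⟩ := hα
  have h2pos : (0:ℝ) < (2:ℝ) ^ α := Real.rpow_pos_of_pos (by norm_num) α
  -- Bernoulli: (3/2)^α ≤ 1 + α/2
  have hbern : ((3:ℝ)/2) ^ α ≤ 1 + α * (1/2) := by
    have := rpow_one_add_le_one_add_mul_self (s := (1/2:ℝ)) (by norm_num)
      (p := α) hα0.le hα1.le
    norm_num at this ⊢
    linarith
  have h3 : (3:ℝ) ^ α ≤ (2:ℝ) ^ α * (1 + α/2) := by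
    calc (3:ℝ) ^ α = (2:ℝ) ^ α * ((3/2:ℝ)) ^ α := by
          rw [← Real.mul_rpow (by norm_num) (by norm_num)]
          norm_num
      _ ≤ (2:ℝ) ^ α * (1 + α/2) := by
          apply mul_le_mul_of_nonneg_left _ h2pos.le
          linarith [hbern]
  have hn2 : (2:ℝ) ≤ (n:ℝ) := by exact_mod_cast hn
  have hnpow : (n:ℝ) ^ (α - 2) ≤ (2:ℝ) ^ (α - 2) :=
    Real.rpow_le_rpow_of_nonpos (by norm_num) hn2 (by linarith)
  have h2eq : (2:ℝ) ^ (α - 2) = (2:ℝ) ^ α / 4 := by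
    rw [Real.rpow_sub (by norm_num)]
    norm_num
  have hnpos : (0:ℝ) < (n:ℝ) ^ (α - 2) :=
    Real.rpow_pos_of_pos (by linarith) _
  have hc : 0 ≤ α * (1 - α) / 2 := by nlinarith
  have key : -(α * (1 - α) / 2) * ((2:ℝ) ^ α / 4) ≤ -(α * (1 - α) / 2) * (n:ℝ) ^ (α - 2) := by
    rw [← h2eq]
    nlinarith [mul_le_mul_of_nonneg_left hnpow hc]
  have lhs : (2 * ((3 : ℝ) ^ α - (2 : ℝ) ^ α) - (2 : ℝ) ^ α) / 3
      ≤ -(α * (1 - α) / 2) * ((2:ℝ) ^ α / 4) := by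
    nlinarith [mul_nonneg (mul_nonneg (sub_nonneg.2 hα1.le) h2pos.le) (by linarith : (0:ℝ) ≤ 8 - 3*α)]
  linarith
end

section
/- For every real α ∈ (0,1) and all integers p ≥ q ≥ 1, one has (1/2)·((p+2)^α − (p+1)^α + q^α − (q+1)^α) ≤ (α(α−1)/2)·(p+1)^{α−2}. -/
/-!
Since `x ↦ x ^ α` is concave, its unit increments decrease, so `q ^ α - (q+1) ^ α` is at most
`p ^ α - (p+1) ^ α`, and the left-hand side is bounded by half the second difference of `x ^ α`
at `p + 1`. That second difference is at most the second derivative `α (α-1) (p+1) ^ (α-2)`,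
because the second derivative is itself concave (`x ^ (α-2)` is convex): comparing the even part
`f (a+t) + f (a-t) - 2 f a` with `f'' a * t ^ 2` by two monotonicity arguments gives the bound.
-/

open Set

theorem ConcaveOn.sub_le_sub_of_le {s : Set ℝ} {f : ℝ → ℝ} (hf : ConcaveOn ℝ s f)
    {x y d : ℝ} (hx : x ∈ s) (hyd : y + d ∈ s) (hd : 0 < d) (hxy : x ≤ y) :
    f (y + d) - f y ≤ f (x + d) - f x := by
  have hxd : x + d ∈ s := hf.1.ordConnected.out hx hyd ⟨by linarith, by linarith⟩
  have hy : y ∈ s := hf.1.ordConnected.out hx hyd ⟨hxy, by linarith⟩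
  have h₁ := hf.neg.secant_mono hx hxd hyd (by linarith) (by linarith) (by linarith)
  have h₂ := hf.neg.secant_mono hyd hx hy (by linarith) (by linarith) hxy
  simp only [Pi.neg_apply, add_sub_cancel_left, sub_add_cancel_left] at h₁ h₂
  have hswap : (-f x - -f (y + d)) / (x - (y + d)) = (-f (y + d) - -f x) / (y + d - x) := by
    rw [← neg_div_neg_eq, neg_sub, neg_sub]
  rw [hswap, div_neg, ← neg_div, neg_sub] at h₂
  have := h₁.trans h₂
  rw [div_le_div_iff_of_pos_right hd] at this
  linarith

theorem antitoneOn_Icc_of_hasDerivAt_nonpos {φ φ' : ℝ → ℝ} {a b : ℝ}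
    (hφ : ∀ t ∈ Icc a b, HasDerivAt φ (φ' t) t) (hφ' : ∀ t ∈ Ioo a b, φ' t ≤ 0) :
    AntitoneOn φ (Icc a b) := by
  refine antitoneOn_of_hasDerivWithinAt_nonpos (f' := φ') (convex_Icc a b)
    (fun t ht ↦ (hφ t ht).continuousAt.continuousWithinAt) ?_ ?_ <;> rw [interior_Icc]
  · exact fun t ht ↦ (hφ t (Ioo_subset_Icc_self ht)).hasDerivWithinAt
  · exact hφ'

theorem add_add_sub_two_mul_le_of_hasDerivAt {f f' f'' : ℝ → ℝ} {a h : ℝ} (hh : 0 ≤ h)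
    (hf : ∀ x ∈ Icc (a - h) (a + h), HasDerivAt f (f' x) x)
    (hf' : ∀ x ∈ Icc (a - h) (a + h), HasDerivAt f' (f'' x) x)
    (hf'' : ∀ t ∈ Ioo 0 h, f'' (a + t) + f'' (a - t) ≤ 2 * f'' a) :
    f (a + h) + f (a - h) - 2 * f a ≤ f'' a * h ^ 2 := by
  have hmem : ∀ t ∈ Icc 0 h, a + t ∈ Icc (a - h) (a + h) ∧ a - t ∈ Icc (a - h) (a + h) :=
    fun t ⟨h₀, h₁⟩ ↦ ⟨⟨by linarith, by linarith⟩, ⟨by linarith, by linarith⟩⟩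
  have hslope : ∀ t ∈ Icc 0 h, f' (a + t) - f' (a - t) - 2 * f'' a * t ≤ 0 := by
    intro t ht
    have := antitoneOn_Icc_of_hasDerivAt_nonpos
      (φ := fun t ↦ f' (a + t) - f' (a - t) - 2 * f'' a * t)
      (φ' := fun t ↦ f'' (a + t) + f'' (a - t) - 2 * f'' a)
      (fun t ht ↦ by
        have := (((hf' _ (hmem t ht).1).comp_const_add a t).sub
          ((hf' _ (hmem t ht).2).comp_const_sub a t)).sub ((hasDerivAt_id t).const_mul (2 * f'' a))
        exact this.congr_deriv (by ring))
      (fun t ht ↦ by linarith [hf'' t ht]) (left_mem_Icc.2 hh) ht ht.1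
    simpa using this
  have := antitoneOn_Icc_of_hasDerivAt_nonpos
    (φ := fun t ↦ f (a + t) + f (a - t) - 2 * f a - f'' a * t ^ 2)
    (φ' := fun t ↦ f' (a + t) - f' (a - t) - 2 * f'' a * t)
    (fun t ht ↦ by
      have := ((((hf _ (hmem t ht).1).comp_const_add a t).add
        ((hf _ (hmem t ht).2).comp_const_sub a t)).sub_const (2 * f a)).sub
        ((hasDerivAt_pow 2 t).const_mul (f'' a))
      exact this.congr_deriv (by push_cast; ring))
    (fun t ht ↦ hslope t (Ioo_subset_Icc_self ht)) (left_mem_Icc.2 hh) (right_mem_Icc.2 hh) hh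
  simp only [add_zero, sub_zero] at this
  linarith

namespace Real

theorem two_mul_rpow_le_rpow_sub_add_rpow_add {β a t : ℝ} (hβ : β ≤ 0)
    (h₁ : 0 < a - t) (h₂ : 0 < a + t) :
    2 * a ^ β ≤ (a - t) ^ β + (a + t) ^ β := by
  have ha : 0 < a := by linarith
  have hhalf : ∀ x : ℝ, 0 < x → x ^ (β / 2) * x ^ (β / 2) = x ^ β := fun x hx ↦ by
    rw [← rpow_add hx, add_halves]
  -- AM-GM: the product of the two square roots is `((a - t) * (a + t)) ^ (β / 2) ≥ (a * a) ^ (β / 2)`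
  have hprod : a ^ β ≤ (a - t) ^ (β / 2) * (a + t) ^ (β / 2) := by
    rw [← hhalf a ha, ← mul_rpow ha.le ha.le, ← mul_rpow h₁.le h₂.le]
    exact rpow_le_rpow_of_nonpos (by positivity) (by nlinarith [sq_nonneg t]) (by linarith)
  rw [← hhalf _ h₁, ← hhalf _ h₂]
  nlinarith [sq_nonneg ((a - t) ^ (β / 2) - (a + t) ^ (β / 2))]

theorem rpow_add_add_rpow_sub_sub_two_mul_rpow_le {α a h : ℝ} (hα : α ∈ Icc 0 1)
    (hh : 0 ≤ h) (hha : h < a) :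
    (a + h) ^ α + (a - h) ^ α - 2 * a ^ α ≤ α * (α - 1) * a ^ (α - 2) * h ^ 2 := by
  have hpos : ∀ x ∈ Icc (a - h) (a + h), x ≠ 0 := fun x hx ↦ by linarith [hx.1]
  have hconc : ∀ t ∈ Ioo 0 h, α * (α - 1) * (a + t) ^ (α - 2) + α * (α - 1) * (a - t) ^ (α - 2)
      ≤ 2 * (α * (α - 1) * a ^ (α - 2)) := by
    intro t ht
    have hmid := two_mul_rpow_le_rpow_sub_add_rpow_add (β := α - 2) (by linarith [hα.2])
      (show 0 < a - t by linarith [ht.2]) (show 0 < a + t by linarith [ht.1])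
    have hneg : α * (α - 1) ≤ 0 := mul_nonpos_of_nonneg_of_nonpos hα.1 (by linarith [hα.2])
    nlinarith
  refine add_add_sub_two_mul_le_of_hasDerivAt (f' := fun x ↦ α * x ^ (α - 1))
    (f'' := fun x ↦ α * (α - 1) * x ^ (α - 2)) hh
    (fun x hx ↦ hasDerivAt_rpow_const (Or.inl (hpos x hx))) (fun x hx ↦ ?_) hconc
  refine ((hasDerivAt_rpow_const (p := α - 1) (Or.inl (hpos x hx))).const_mul α).congr_deriv ?_
  rw [show α - 1 - 1 = α - 2 by ring]; ring

end Real

/-- for `α ∈ (0,1)` and integers `p ≥ q ≥ 1`,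
`(1/2)((p+2)^α - (p+1)^α + q^α - (q+1)^α) ≤ (α(α-1)/2)(p+1)^{α-2}` (real powers). -/
theorem paired_flips_bound (α : ℝ) (hα : α ∈ Set.Ioo (0 : ℝ) 1)
    (p q : ℕ) (hq : 1 ≤ q) (hpq : q ≤ p) :
    (1 / 2 : ℝ) * (((p : ℝ) + 2) ^ α - ((p : ℝ) + 1) ^ α
        + (q : ℝ) ^ α - ((q : ℝ) + 1) ^ α)
      ≤ α * (α - 1) / 2 * ((p : ℝ) + 1) ^ (α - 2) := by
  have hq' : (1 : ℝ) ≤ q := by exact_mod_cast hq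
  have hpq' : (q : ℝ) ≤ p := by exact_mod_cast hpq
  have hincr : ((p : ℝ) + 1) ^ α - (p : ℝ) ^ α ≤ ((q : ℝ) + 1) ^ α - (q : ℝ) ^ α :=
    (Real.concaveOn_rpow hα.1.le hα.2.le).sub_le_sub_of_le (by simp) (by simp; positivity)
      zero_lt_one hpq'
  have hsecond := Real.rpow_add_add_rpow_sub_sub_two_mul_rpow_le (a := (p : ℝ) + 1)
    (Ioo_subset_Icc_self hα) zero_le_one (by linarith)
  rw [add_assoc, one_add_one_eq_two, add_sub_cancel_right, one_pow, mul_one] at hsecond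
  linarith
end
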